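/- For the Wang set 𝒯_D = 𝒯_a ∪ 𝒯_b: (a) there is no tiling of ℤ×{0,1} by 𝒯_D in which every tile belongs to 𝒯_b; (b) there is no tiling of ℤ×{0,1,2} by 𝒯_D in which every tile belongs to 𝒯_a; (c) there is no tiling of ℤ×{0,1,2,3,4} by 𝒯_D whose rows 0,1,2,3,4 use only tiles of 𝒯_b, 𝒯_a, 𝒯_b, 𝒯_a, 𝒯_b respectively. -/
import Mathlib


structure WangTile (H V : Type*) where
  west : H
  east : H
  south : V
  north : V
deriving DecidableEq

def TilingOn {H V : Type*} (T : Set (WangTile H V)) (X : Set (ℤ × ℤ))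
    (f : ℤ × ℤ → WangTile H V) : Prop :=
  (∀ p ∈ X, f p ∈ T) ∧
  (∀ x y : ℤ, (x, y) ∈ X → (x + 1, y) ∈ X →
    (f (x, y)).east = (f (x + 1, y)).west) ∧
  (∀ x y : ℤ, (x, y) ∈ X → (x, y + 1) ∈ X →
    (f (x, y)).north = (f (x, y + 1)).south)

def Tiling {H V : Type*} (T : Set (WangTile H V)) (f : ℤ × ℤ → WangTile H V) : Prop :=
  TilingOn T Set.univ f

def TilesPlane {H V : Type*} (T : Set (WangTile H V)) : Prop :=
  ∃ f, Tiling T f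

def PeriodicTiling {H V : Type*} (f : ℤ × ℤ → WangTile H V) : Prop :=
  ∃ u v : ℤ, (u, v) ≠ (0, 0) ∧ ∀ x y : ℤ, f (x + u, y + v) = f (x, y)

def Aperiodic {H V : Type*} (T : Set (WangTile H V)) : Prop :=
  TilesPlane T ∧ ∀ f, Tiling T f → ¬ PeriodicTiling f

def MinimallyAperiodic {H V : Type*} (T : Set (WangTile H V)) : Prop :=
  Aperiodic T ∧ ∀ S : Set (WangTile H V), S ⊂ T → ¬ TilesPlane S

/-- The twenty horizontal colors of the Wang set `𝒯_D = 𝒯_a ∪ 𝒯_b`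
(`a,…,j` for `𝒯_a` and `K,…,R` for `𝒯_b`). -/
inductive HC
  | a | b | c | d | e | f | g | h | i | j
  | K | L | M | M' | N | O | O' | P | Q | R
deriving DecidableEq

open HC in
/-- The Wang set `𝒯_a`: horizontal colors `a,…,j`, vertical colors `0, 1`.
Tiles are written `⟨west, east, south, north⟩`. -/
def Ta : Set (WangTile HC (Fin 2)) :=
  { ⟨a, b, 1, 0⟩, ⟨f, b, 1, 1⟩, ⟨g, a, 1, 1⟩, ⟨e, f, 1, 1⟩, ⟨c, d, 1, 0⟩,
    ⟨b, c, 1, 0⟩, ⟨b, g, 1, 1⟩, ⟨d, e, 1, 1⟩, ⟨i, j, 0, 0⟩, ⟨c, i, 0, 0⟩,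
    ⟨d, h, 0, 0⟩, ⟨j, a, 0, 0⟩, ⟨h, c, 0, 0⟩, ⟨h, g, 0, 1⟩ }

open HC in
/-- The Wang set `𝒯_b`: horizontal colors `K,…,R`, vertical colors `0, 1`. -/
def Tb : Set (WangTile HC (Fin 2)) :=
  { ⟨P, R, 1, 1⟩, ⟨M', K, 1, 1⟩, ⟨R, M, 1, 1⟩, ⟨R, M', 1, 1⟩, ⟨Q, O', 0, 0⟩,
    ⟨N, O, 0, 1⟩, ⟨P, Q, 0, 1⟩, ⟨M, N, 0, 1⟩, ⟨R, L, 0, 0⟩, ⟨K, L, 0, 1⟩,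
    ⟨O, R, 0, 0⟩, ⟨O, P, 0, 1⟩, ⟨L, M, 0, 1⟩, ⟨O', R, 0, 0⟩ }

/-- The Wang set `𝒯_D = 𝒯_a ∪ 𝒯_b`. -/
def TD : Set (WangTile HC (Fin 2)) := Ta ∪ Tb

/-- The horizontal strip `ℤ × {0, …, m}`. -/
def strip (m : ℕ) : Set (ℤ × ℤ) := {p : ℤ × ℤ | 0 ≤ p.2 ∧ p.2 ≤ (m : ℤ)}

def pA0 : HC → ℤ
  | .K => 3
  | .L => 9
  | .M => 6
  | .M' => 4
  | .N => 3
  | .O' => 1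
  | .P => -2
  | .Q => -4
  | .R => 5
  | _ => 0

def pA1 : HC → ℤ
  | .K => 7
  | .L => 4
  | .M => 1
  | .M' => 2
  | .N => -2
  | .O => -5
  | .O' => -1
  | .P => -8
  | .Q => -1
  | .R => -3
  | _ => 0

def pB0 : HC → HC → ℤ
  | .a, .a => 6
  | .a, .b => 12
  | .a, .c => 5
  | .a, .d => 2
  | .a, .e => 15
  | .a, .f => 10
  | .a, .g => 8
  | .a, .h => -3
  | .a, .i => 2
  | .b, .a => 1
  | .b, .b => -1
  | .b, .c => 4
  | .b, .d => -6
  | .b, .e => 1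
  | .b, .f => -1
  | .b, .g => 5
  | .b, .h => -2
  | .b, .i => 3
  | .b, .j => 2
  | .c, .a => 4
  | .c, .c => 3
  | .c, .d => -3
  | .c, .g => 4
  | .c, .h => -12
  | .c, .i => 2
  | .c, .j => -2
  | .d, .a => -6
  | .d, .b => -12
  | .d, .c => -10
  | .d, .d => -17
  | .d, .e => -10
  | .d, .f => -13
  | .d, .g => -5
  | .d, .h => -4
  | .d, .i => 3
  | .e, .a => -1
  | .e, .b => -6
  | .e, .c => -6
  | .e, .d => -12
  | .e, .e => -10
  | .e, .f => -5
  | .e, .g => -8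
  | .f, .a => -4
  | .f, .b => 2
  | .f, .c => -4
  | .f, .d => -6
  | .f, .e => -5
  | .f, .f => -6
  | .f, .g => -3
  | .g, .a => 9
  | .g, .b => 3
  | .g, .c => 3
  | .g, .d => 5
  | .g, .e => 5
  | .g, .f => 5
  | .g, .g => 2
  | .h, .a => -2
  | .h, .b => -4
  | .h, .c => 1
  | .h, .d => -7
  | .h, .e => -3
  | .h, .f => -6
  | .h, .g => 2
  | .h, .h => -2
  | .h, .i => -2
  | .h, .j => 2
  | .i, .a => 3
  | .i, .c => -1
  | .i, .d => -2
  | .i, .g => 2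
  | .i, .h => -3
  | .i, .i => 3
  | .i, .j => 1
  | .j, .a => 1
  | .j, .c => 1
  | .j, .d => -3
  | .j, .g => 3
  | .j, .h => -2
  | .j, .j => 2
  | _, _ => 0

def pB1 : HC → HC → ℤ
  | .a, .a => 16
  | .a, .b => 6
  | .a, .c => 1
  | .a, .d => -4
  | .a, .f => 5
  | .a, .g => 5
  | .a, .h => -5
  | .a, .i => 4
  | .a, .j => 5
  | .b, .a => 6
  | .b, .b => -1
  | .b, .c => -4
  | .b, .d => -8
  | .b, .f => -1
  | .b, .g => 1
  | .b, .h => -2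
  | .b, .i => 2
  | .b, .j => 6
  | .c, .a => 10
  | .c, .c => -1
  | .c, .d => -15
  | .c, .g => 2
  | .c, .h => -9
  | .c, .i => -4
  | .c, .j => 1
  | .d, .a => 4
  | .d, .b => -3
  | .d, .c => -5
  | .d, .d => -9
  | .d, .e => -5
  | .d, .f => -3
  | .d, .g => -2
  | .d, .h => -10
  | .d, .i => 4
  | .d, .j => 1
  | .e, .a => -3
  | .e, .b => -2
  | .e, .c => -2
  | .e, .d => -1
  | .e, .e => -4
  | .e, .f => -3
  | .e, .g => -1
  | .f, .a => 1
  | .f, .b => -2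
  | .f, .c => -5
  | .f, .d => 1
  | .f, .g => 1
  | .g, .a => 3
  | .g, .b => 4
  | .g, .c => -3
  | .g, .d => -3
  | .g, .e => 2
  | .g, .f => 2
  | .g, .g => 3
  | .h, .a => 8
  | .h, .b => -1
  | .h, .c => -3
  | .h, .d => -10
  | .h, .f => -1
  | .h, .g => 1
  | .h, .h => -2
  | .h, .i => 2
  | .h, .j => 11
  | .i, .a => 7
  | .i, .c => -6
  | .i, .d => -11
  | .i, .g => 2
  | .i, .h => -10
  | .i, .i => 2
  | .i, .j => 3
  | .j, .a => 9
  | .j, .c => -3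
  | .j, .d => -12
  | .j, .g => 3
  | .j, .h => -4
  | .j, .j => 8
  | _, _ => 0

def pC0 : HC → HC → ℤ
  | .K, .a => -9
  | .K, .b => 4
  | .K, .c => 10
  | .K, .d => 3
  | .K, .e => 6
  | .K, .f => 2
  | .K, .g => 3
  | .L, .a => 5
  | .L, .b => -5
  | .L, .c => 32
  | .L, .d => 5
  | .L, .e => -2
  | .L, .f => 9
  | .L, .g => 14
  | .L, .h => 9
  | .L, .i => 37
  | .L, .j => 19
  | .M, .b => 2
  | .M, .c => 7
  | .M, .d => 21
  | .M, .e => -2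
  | .M, .f => 4
  | .M, .g => -6
  | .M', .b => -1
  | .M', .c => 7
  | .M', .d => 15
  | .M', .e => -4
  | .M', .f => 3
  | .M', .g => -1
  | .N, .a => -16
  | .N, .c => 10
  | .N, .d => 5
  | .N, .e => -3
  | .N, .f => -1
  | .N, .g => -14
  | .O, .a => -30
  | .O, .b => -16
  | .O, .c => 10
  | .O, .e => 1
  | .O, .f => -4
  | .O, .g => 2
  | .O, .h => -3
  | .O, .i => -21
  | .O, .j => -32
  | .O', .a => 13
  | .O', .c => 4
  | .O', .d => -9
  | .O', .g => 1
  | .O', .h => 4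
  | .O', .i => -13
  | .O', .j => -31
  | .P, .a => -6
  | .P, .b => -33
  | .P, .c => -5
  | .P, .d => 5
  | .P, .e => -5
  | .P, .f => 7
  | .Q, .a => 1
  | .Q, .b => 4
  | .Q, .c => -25
  | .Q, .d => -14
  | .Q, .e => 2
  | .Q, .f => 2
  | .Q, .h => -15
  | .Q, .i => -28
  | .Q, .j => -17
  | .R, .a => -2
  | .R, .b => -4
  | .R, .c => 23
  | .R, .d => -10
  | .R, .e => -3
  | .R, .f => 3
  | .R, .g => 9
  | .R, .h => 16
  | .R, .i => 23
  | .R, .j => -19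
  | _, _ => 0

def pC1 : HC → HC → ℤ
  | .a, .K => 7
  | .a, .L => -1
  | .a, .M => -12
  | .a, .M' => 4
  | .a, .N => -11
  | .a, .O => -20
  | .a, .O' => -20
  | .a, .P => -21
  | .a, .Q => -24
  | .a, .R => -2
  | .b, .K => 16
  | .b, .L => 12
  | .b, .M => -1
  | .b, .M' => -1
  | .b, .N => -7
  | .b, .O => -6
  | .b, .O' => -5
  | .b, .P => -15
  | .b, .Q => -15
  | .b, .R => 2
  | .c, .K => -3
  | .c, .L => 8
  | .c, .M => 1
  | .c, .N => -5
  | .c, .O => -12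
  | .c, .O' => -8
  | .c, .P => -11
  | .c, .Q => -18
  | .c, .R => 5
  | .d, .K => -1
  | .d, .L => 27
  | .d, .M => 16
  | .d, .M' => -1
  | .d, .N => 17
  | .d, .O => 7
  | .d, .O' => 10
  | .d, .Q => 3
  | .d, .R => 22
  | .e, .K => 9
  | .e, .M => 27
  | .e, .M' => 31
  | .e, .P => -19
  | .e, .R => 16
  | .f, .K => 27
  | .f, .M => 6
  | .f, .M' => 2
  | .f, .P => -23
  | .f, .R => -18
  | .g, .K => 7
  | .g, .M => 5
  | .g, .M' => 4
  | .g, .P => -16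
  | .g, .R => -8
  | .h, .K => -2
  | .h, .L => 18
  | .h, .M => 8
  | .h, .M' => -2
  | .h, .N => 2
  | .h, .O => 3
  | .h, .O' => 3
  | .h, .P => -6
  | .h, .Q => -11
  | .h, .R => 12
  | .i, .K => -2
  | .i, .L => 5
  | .i, .M => -6
  | .i, .N => -7
  | .i, .O => -14
  | .i, .O' => -12
  | .i, .P => -21
  | .i, .Q => -18
  | .i, .R => -2
  | .j, .K => -3
  | .j, .L => 15
  | .j, .M => 10
  | .j, .N => 2
  | .j, .O => 1
  | .j, .O' => 4
  | .j, .P => -4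
  | .j, .Q => -12
  | .j, .R => 12
  | _, _ => 0

def pC2 : HC → HC → ℤ
  | .K, .a => 7
  | .K, .b => 13
  | .K, .c => 27
  | .K, .d => 25
  | .K, .e => 20
  | .K, .f => 17
  | .K, .g => 11
  | .L, .a => 2
  | .L, .b => 7
  | .L, .c => 26
  | .L, .d => 18
  | .L, .e => 14
  | .L, .f => 16
  | .L, .g => 10
  | .L, .h => 15
  | .L, .i => 19
  | .L, .j => 20
  | .M, .a => 2
  | .M, .b => 5
  | .M, .c => 22
  | .M, .d => 20
  | .M, .e => 9
  | .M, .f => 15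
  | .M, .g => 5
  | .M', .a => -2
  | .M', .c => 17
  | .M', .d => 16
  | .M', .e => 5
  | .M', .f => 10
  | .N, .a => -7
  | .N, .c => 15
  | .N, .d => 11
  | .N, .e => 5
  | .N, .f => 4
  | .O, .a => -12
  | .O, .b => -7
  | .O, .c => 11
  | .O, .d => 4
  | .O, .e => -2
  | .O, .f => 2
  | .O, .g => -6
  | .O, .h => -7
  | .O, .i => -13
  | .O, .j => -19
  | .O', .a => 12
  | .O', .c => 7
  | .O', .d => -4
  | .O', .g => 2
  | .O', .h => -8
  | .O', .i => -2
  | .O', .j => -20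
  | .P, .a => -19
  | .P, .b => -12
  | .P, .c => 4
  | .P, .d => 1
  | .P, .e => -7
  | .P, .f => -7
  | .P, .g => -13
  | .Q, .b => 5
  | .Q, .c => -3
  | .Q, .d => -9
  | .Q, .e => 2
  | .Q, .f => 3
  | .Q, .h => -14
  | .Q, .i => -28
  | .Q, .j => -6
  | .R, .a => -15
  | .R, .b => -10
  | .R, .c => 10
  | .R, .d => 3
  | .R, .e => -1
  | .R, .f => -2
  | .R, .g => -6
  | .R, .h => 2
  | .R, .i => 10
  | .R, .j => -5
  | _, _ => 0

def pC3 : HC → HC → ℤ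
  | .a, .K => 13
  | .a, .L => -11
  | .a, .M => -4
  | .a, .M' => 5
  | .a, .N => -5
  | .a, .O => -25
  | .a, .O' => -17
  | .a, .P => -11
  | .a, .Q => -5
  | .a, .R => 7
  | .b, .K => 32
  | .b, .L => 18
  | .b, .M => -4
  | .b, .M' => 1
  | .b, .N => -3
  | .b, .O => 1
  | .b, .O' => 2
  | .b, .P => -23
  | .b, .Q => -5
  | .b, .R => -10
  | .c, .K => -3
  | .c, .L => 21
  | .c, .M => 12
  | .c, .N => -11
  | .c, .O => -14
  | .c, .O' => -10
  | .c, .P => -1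
  | .c, .Q => -4
  | .c, .R => -2
  | .d, .K => -1
  | .d, .L => 12
  | .d, .M => 32
  | .d, .M' => -15
  | .d, .N => 25
  | .d, .O => 2
  | .d, .O' => 9
  | .d, .P => -3
  | .d, .Q => 12
  | .d, .R => 4
  | .e, .K => 9
  | .e, .M => 25
  | .e, .M' => 23
  | .e, .P => -29
  | .e, .R => 12
  | .f, .K => 34
  | .f, .M => 25
  | .f, .M' => 17
  | .f, .P => -25
  | .f, .R => -20
  | .g, .K => 12
  | .g, .M => 6
  | .g, .M' => -2
  | .g, .P => -9
  | .g, .R => -17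
  | .h, .L => 2
  | .h, .M => 7
  | .h, .N => 17
  | .h, .O => 15
  | .h, .O' => 6
  | .h, .P => -8
  | .h, .R => 2
  | .i, .L => 1
  | .i, .M => 6
  | .i, .N => 9
  | .i, .O => -3
  | .i, .O' => -2
  | .i, .P => -2
  | .i, .Q => 3
  | .j, .K => -2
  | .j, .L => 1
  | .j, .M => 1
  | .j, .N => -8
  | .j, .O => -1
  | .j, .O' => 4
  | .j, .P => -2
  | .j, .Q => -5
  | .j, .R => -1
  | _, _ => 0

open HC in
def TaL : List (WangTile HC (Fin 2)) :=
  [⟨a, b, 1, 0⟩, ⟨f, b, 1, 1⟩, ⟨g, a, 1, 1⟩, ⟨e, f, 1, 1⟩, ⟨c, d, 1, 0⟩,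
   ⟨b, c, 1, 0⟩, ⟨b, g, 1, 1⟩, ⟨d, e, 1, 1⟩, ⟨i, j, 0, 0⟩, ⟨c, i, 0, 0⟩,
   ⟨d, h, 0, 0⟩, ⟨j, a, 0, 0⟩, ⟨h, c, 0, 0⟩, ⟨h, g, 0, 1⟩]

open HC in
def TbL : List (WangTile HC (Fin 2)) :=
  [⟨K, L, 0, 1⟩, ⟨L, M, 0, 1⟩, ⟨M, N, 0, 1⟩, ⟨M', K, 1, 1⟩, ⟨N, O, 0, 1⟩,
   ⟨O, P, 0, 1⟩, ⟨O, R, 0, 0⟩, ⟨O', R, 0, 0⟩, ⟨P, Q, 0, 1⟩, ⟨P, R, 1, 1⟩,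
   ⟨Q, O', 0, 0⟩, ⟨R, L, 0, 0⟩, ⟨R, M, 1, 1⟩, ⟨R, M', 1, 1⟩]

lemma mem_TaL {t : WangTile HC (Fin 2)} (ht : t ∈ Ta) : t ∈ TaL := by
  simp only [Ta, Set.mem_insert_iff, Set.mem_singleton_iff] at ht
  simp only [TaL, List.mem_cons, List.not_mem_nil, or_false]
  tauto

lemma mem_TbL {t : WangTile HC (Fin 2)} (ht : t ∈ Tb) : t ∈ TbL := by
  simp only [Tb, Set.mem_insert_iff, Set.mem_singleton_iff] at ht
  simp only [TbL, List.mem_cons, List.not_mem_nil, or_false]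
  tauto

lemma colA : ∀ t0 ∈ TbL, ∀ t1 ∈ TbL, t0.north = t1.south →
    pA0 t0.west + pA1 t1.west + 1 ≤ pA0 t0.east + pA1 t1.east := by decide

set_option maxHeartbeats 1000000 in
lemma colB : ∀ t0 ∈ TaL, ∀ t1 ∈ TaL, t0.north = t1.south → ∀ t2 ∈ TaL,
    t1.north = t2.south →
    pB0 t0.west t1.west + pB1 t1.west t2.west + 1 ≤
      pB0 t0.east t1.east + pB1 t1.east t2.east := by decide

set_option maxHeartbeats 4000000 in
lemma colC : ∀ t0 ∈ TbL, ∀ t1 ∈ TaL, t0.north = t1.south → ∀ t2 ∈ TbL,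
    t1.north = t2.south → ∀ t3 ∈ TaL, t2.north = t3.south → ∀ t4 ∈ TbL,
    t3.north = t4.south →
    pC0 t0.west t1.west + pC1 t1.west t2.west + pC2 t2.west t3.west
      + pC3 t3.west t4.west + 1 ≤
    pC0 t0.east t1.east + pC1 t1.east t2.east + pC2 t2.east t3.east
      + pC3 t3.east t4.east := by decide

instance : Fintype HC where
  elems := ⟨([HC.a, HC.b, HC.c, HC.d, HC.e, HC.f, HC.g, HC.h, HC.i, HC.j,
     HC.K, HC.L, HC.M, HC.M', HC.N, HC.O, HC.O', HC.P, HC.Q, HC.R] : List HC), by decide⟩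
  complete := fun x => by cases x <;> decide

lemma pA0_bdd : ∀ u : HC, -9 ≤ pA0 u ∧ pA0 u ≤ 9 := by decide
lemma pA1_bdd : ∀ u : HC, -8 ≤ pA1 u ∧ pA1 u ≤ 8 := by decide
lemma pB0_bdd : ∀ u v : HC, -17 ≤ pB0 u v ∧ pB0 u v ≤ 17 := by decide
lemma pB1_bdd : ∀ u v : HC, -16 ≤ pB1 u v ∧ pB1 u v ≤ 16 := by decide
lemma pC0_bdd : ∀ u v : HC, -37 ≤ pC0 u v ∧ pC0 u v ≤ 37 := by decide
lemma pC1_bdd : ∀ u v : HC, -31 ≤ pC1 u v ∧ pC1 u v ≤ 31 := by decide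
lemma pC2_bdd : ∀ u v : HC, -28 ≤ pC2 u v ∧ pC2 u v ≤ 28 := by decide
lemma pC3_bdd : ∀ u v : HC, -34 ≤ pC3 u v ∧ pC3 u v ≤ 34 := by decide

lemma no_bdd_incr (g : ℤ → ℤ) (B : ℤ) (hlb : ∀ x, -B ≤ g x) (hub : ∀ x, g x ≤ B)
    (hs : ∀ x, g x + 1 ≤ g (x + 1)) : False := by
  have key : ∀ n : ℕ, g 0 + n ≤ g n := by
    intro n
    induction n with
    | zero => simp
    | succ k ih =>
      have h1 := hs (k : ℤ)
      push_cast
      push_cast at ih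
      omega
  have hb0l := hlb 0
  have hb0u := hub 0
  have h2 := key (2 * B + 1).toNat
  rw [Int.toNat_of_nonneg (by omega)] at h2
  have h3 := hub (2 * B + 1)
  omega

lemma mem_strip (m : ℕ) (x y : ℤ) (h0 : 0 ≤ y) (h1 : y ≤ (m : ℤ)) :
    (x, y) ∈ strip m := ⟨h0, h1⟩

/-- (a) no tiling of `ℤ×{0,1}` by `𝒯_D` uses only tiles of `𝒯_b`;
(b) no tiling of `ℤ×{0,1,2}` by `𝒯_D` uses only tiles of `𝒯_a`;
(c) no tiling of `ℤ×{0,…,4}` by `𝒯_D` has rows `0,…,4` in `𝒯_b, 𝒯_a, 𝒯_b, 𝒯_a, 𝒯_b`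
respectively. -/
theorem TD_strip_obstructions :
    (¬ ∃ f, TilingOn TD (strip 1) f ∧ ∀ p ∈ strip 1, f p ∈ Tb) ∧
    (¬ ∃ f, TilingOn TD (strip 2) f ∧ ∀ p ∈ strip 2, f p ∈ Ta) ∧
    (¬ ∃ f, TilingOn TD (strip 4) f ∧ ∀ x : ℤ,
      f (x, 0) ∈ Tb ∧ f (x, 1) ∈ Ta ∧ f (x, 2) ∈ Tb ∧ f (x, 3) ∈ Ta ∧ f (x, 4) ∈ Tb) := by
  refine ⟨?_, ?_, ?_⟩
  · rintro ⟨f, ⟨hmem, hH, hV⟩, hb⟩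
    refine no_bdd_incr (fun x => pA0 (f (x, 0)).west + pA1 (f (x, 1)).west) 17 ?_ ?_ ?_
    · intro x
      have b0 := pA0_bdd (f (x, 0)).west
      have b1 := pA1_bdd (f (x, 1)).west
      omega
    · intro x
      have b0 := pA0_bdd (f (x, 0)).west
      have b1 := pA1_bdd (f (x, 1)).west
      omega
    · intro x
      have m0 : f (x, 0) ∈ Tb := hb (x, 0) (mem_strip 1 x 0 (by norm_num) (by norm_num))
      have m1 : f (x, 1) ∈ Tb := hb (x, 1) (mem_strip 1 x 1 (by norm_num) (by norm_num))
      have hv := hV x 0 (mem_strip 1 x 0 (by norm_num) (by norm_num))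
        (mem_strip 1 x (0 + 1) (by norm_num) (by norm_num))
      have h0 := hH x 0 (mem_strip 1 x 0 (by norm_num) (by norm_num))
        (mem_strip 1 x 0 (by norm_num) (by norm_num))
      have h1 := hH x 1 (mem_strip 1 x 1 (by norm_num) (by norm_num))
        (mem_strip 1 x 1 (by norm_num) (by norm_num))
      norm_num at hv
      have key := colA _ (mem_TbL m0) _ (mem_TbL m1) hv
      rw [h0, h1] at key
      simpa using key
  · rintro ⟨f, ⟨hmem, hH, hV⟩, hb⟩
    refine no_bdd_incr (fun x => pB0 (f (x, 0)).west (f (x, 1)).west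
      + pB1 (f (x, 1)).west (f (x, 2)).west) 33 ?_ ?_ ?_
    · intro x
      have b0 := pB0_bdd (f (x, 0)).west (f (x, 1)).west
      have b1 := pB1_bdd (f (x, 1)).west (f (x, 2)).west
      omega
    · intro x
      have b0 := pB0_bdd (f (x, 0)).west (f (x, 1)).west
      have b1 := pB1_bdd (f (x, 1)).west (f (x, 2)).west
      omega
    · intro x
      have m0 : f (x, 0) ∈ Ta := hb (x, 0) (mem_strip 2 x 0 (by norm_num) (by norm_num))
      have m1 : f (x, 1) ∈ Ta := hb (x, 1) (mem_strip 2 x 1 (by norm_num) (by norm_num))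
      have m2 : f (x, 2) ∈ Ta := hb (x, 2) (mem_strip 2 x 2 (by norm_num) (by norm_num))
      have hv0 := hV x 0 (mem_strip 2 x 0 (by norm_num) (by norm_num))
        (mem_strip 2 x (0 + 1) (by norm_num) (by norm_num))
      have hv1 := hV x 1 (mem_strip 2 x 1 (by norm_num) (by norm_num))
        (mem_strip 2 x (1 + 1) (by norm_num) (by norm_num))
      have h0 := hH x 0 (mem_strip 2 x 0 (by norm_num) (by norm_num))
        (mem_strip 2 x 0 (by norm_num) (by norm_num))
      have h1 := hH x 1 (mem_strip 2 x 1 (by norm_num) (by norm_num))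
        (mem_strip 2 x 1 (by norm_num) (by norm_num))
      have h2 := hH x 2 (mem_strip 2 x 2 (by norm_num) (by norm_num))
        (mem_strip 2 x 2 (by norm_num) (by norm_num))
      norm_num at hv0 hv1
      have key := colB _ (mem_TaL m0) _ (mem_TaL m1) hv0 _ (mem_TaL m2) hv1
      rw [h0, h1, h2] at key
      simpa using key
  · rintro ⟨f, ⟨hmem, hH, hV⟩, hb⟩
    refine no_bdd_incr (fun x => pC0 (f (x, 0)).west (f (x, 1)).west
      + pC1 (f (x, 1)).west (f (x, 2)).west
      + pC2 (f (x, 2)).west (f (x, 3)).west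
      + pC3 (f (x, 3)).west (f (x, 4)).west) 130 ?_ ?_ ?_
    · intro x
      have b0 := pC0_bdd (f (x, 0)).west (f (x, 1)).west
      have b1 := pC1_bdd (f (x, 1)).west (f (x, 2)).west
      have b2 := pC2_bdd (f (x, 2)).west (f (x, 3)).west
      have b3 := pC3_bdd (f (x, 3)).west (f (x, 4)).west
      omega
    · intro x
      have b0 := pC0_bdd (f (x, 0)).west (f (x, 1)).west
      have b1 := pC1_bdd (f (x, 1)).west (f (x, 2)).west
      have b2 := pC2_bdd (f (x, 2)).west (f (x, 3)).west
      have b3 := pC3_bdd (f (x, 3)).west (f (x, 4)).west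
      omega
    · intro x
      obtain ⟨m0, m1, m2, m3, m4⟩ := hb x
      have hv0 := hV x 0 (mem_strip 4 x 0 (by norm_num) (by norm_num))
        (mem_strip 4 x (0 + 1) (by norm_num) (by norm_num))
      have hv1 := hV x 1 (mem_strip 4 x 1 (by norm_num) (by norm_num))
        (mem_strip 4 x (1 + 1) (by norm_num) (by norm_num))
      have hv2 := hV x 2 (mem_strip 4 x 2 (by norm_num) (by norm_num))
        (mem_strip 4 x (2 + 1) (by norm_num) (by norm_num))
      have hv3 := hV x 3 (mem_strip 4 x 3 (by norm_num) (by norm_num))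
        (mem_strip 4 x (3 + 1) (by norm_num) (by norm_num))
      have h0 := hH x 0 (mem_strip 4 x 0 (by norm_num) (by norm_num))
        (mem_strip 4 x 0 (by norm_num) (by norm_num))
      have h1 := hH x 1 (mem_strip 4 x 1 (by norm_num) (by norm_num))
        (mem_strip 4 x 1 (by norm_num) (by norm_num))
      have h2 := hH x 2 (mem_strip 4 x 2 (by norm_num) (by norm_num))
        (mem_strip 4 x 2 (by norm_num) (by norm_num))
      have h3 := hH x 3 (mem_strip 4 x 3 (by norm_num) (by norm_num))
        (mem_strip 4 x 3 (by norm_num) (by norm_num))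
      have h4 := hH x 4 (mem_strip 4 x 4 (by norm_num) (by norm_num))
        (mem_strip 4 x 4 (by norm_num) (by norm_num))
      norm_num at hv0 hv1 hv2 hv3
      have key := colC _ (mem_TbL m0) _ (mem_TaL m1) hv0 _ (mem_TbL m2) hv1
        _ (mem_TaL m3) hv2 _ (mem_TbL m4) hv3
      rw [h0, h1, h2, h3, h4] at key
      simpa using key
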